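/- If λ₁, …, λ_d are complex numbers with |λ_j| = 1 for all j, and the polynomial p(x) = ∏_{j=1}^d (x - λ_j) has integer coefficients, then every λ_j is a root of unity. -/

import Mathlib

/-!
The Mahler measure of `∏ (X - λ_j)` is `∏ max 1 |λ_j| = 1`. Since the coefficients are integers,
Kronecker's theorem in its Mahler-measure form (`Polynomial.pow_eq_one_of_mahlerMeasure_eq_one`)
applies: every nonzero complex root of an integer polynomial of Mahler measure 1 is a root of unity.
-/

open Polynomial

namespace Polynomial

theorem mahlerMeasure_prod_X_sub_C {ι : Type*} (s : Finset ι) (f : ι → ℂ) :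
    (∏ i ∈ s, (X - C (f i))).mahlerMeasure = ∏ i ∈ s, max 1 ‖f i‖ := by
  rw [Finset.prod_eq_multiset_prod, prod_mahlerMeasure_eq_mahlerMeasure_prod, Multiset.map_map]
  simp only [Function.comp_def, mahlerMeasure_X_sub_C, Finset.prod_eq_multiset_prod]

theorem mem_roots_prod_X_sub_C {R ι : Type*} [CommRing R] [IsDomain R] (s : Finset ι)
    (f : ι → R) {i : ι} (hi : i ∈ s) : f i ∈ (∏ i ∈ s, (X - C (f i))).roots := by
  have h := roots_multiset_prod_X_sub_C (s.val.map f)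
  rw [Multiset.map_map] at h
  rw [Finset.prod_eq_multiset_prod]
  exact h ▸ Multiset.mem_map_of_mem f hi

end Polynomial

/-- Kronecker's lemma: if `λ₁, …, λ_d` are complex numbers of modulus 1 such that
`p(x) = ∏ (x - λ_j)` has integer coefficients, then each `λ_j` is a root of unity. -/
theorem kronecker_lemma (d : ℕ) (lam : Fin d → ℂ)
    (hmod : ∀ j, ‖lam j‖ = 1)
    (hint : ∀ n : ℕ, ∃ z : ℤ,
      (∏ j : Fin d, (Polynomial.X - Polynomial.C (lam j))).coeff n = (z : ℂ)) :
    ∀ j, ∃ n : ℕ, 0 < n ∧ lam j ^ n = 1 := by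
  intro j
  obtain ⟨q, hq⟩ := (mem_lifts _).1 <|
    (lifts_iff_coeff_lifts (f := Int.castRingHom ℂ) _).2 fun n ↦ (hint n).imp fun _ hz ↦ hz.symm
  have hmahler : (q.map (Int.castRingHom ℂ)).mahlerMeasure = 1 := by
    rw [hq, mahlerMeasure_prod_X_sub_C]
    simp [hmod]
  have hroot : lam j ∈ q.aroots ℂ := by
    rw [aroots_def, algebraMap_int_eq, hq]
    exact mem_roots_prod_X_sub_C _ lam (Finset.mem_univ j)
  have hne : lam j ≠ 0 := norm_ne_zero_iff.1 (by simp [hmod])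
  exact pow_eq_one_of_mahlerMeasure_eq_one hmahler hne hroot
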